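/- arXiv:2503.14981 — 4 statements merged into one kernel-verified Lean document; each statement's English description precedes it below -/
import Mathlib

section
/- Let 𝔥 be a Euclidean space with spectral decomposition system (𝒳, S, γ, (Λ_a)_{a∈A}) and spectral-induced ordering mapping τ, and let x, y ∈ 𝒳. Then ⟨τ(x), τ(y)⟩ is the greatest element of the set {⟨s • x, y⟩ : s ∈ S}; in particular ⟨τ(x), τ(y)⟩ = max_{s∈S} ⟨s • x, y⟩ and this maximum is attained. -/
/-!
Every `Λ a` is an isometry with `γ ∘ Λ a = τ`, so the trace inequality on `𝓗` pulls back to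
`⟪u, v⟫ ≤ ⟪τ u, τ v⟫` on `𝓧`; with `u = s • x` and the `S`-invariance of `τ` this bounds every
`⟪s • x, y⟫`. The bound is attained: if `τ x = s • x` and `τ y = t • y`, then
`⟪(t⁻¹ * s) • x, y⟫ = ⟪s • x, t • y⟫ = ⟪τ x, τ y⟫` because `t` acts isometrically.
-/

open scoped InnerProductSpace

/-- A spectral decomposition system `(𝓧, S, γ, (Λ a)_{a ∈ A})` for a Euclidean space `𝓗`,
with spectral-induced ordering mapping `τ`. -/
structure SpectralDecompositionSystem
    (𝓗 : Type*) (𝓧 : Type*) [NormedAddCommGroup 𝓗] [InnerProductSpace ℝ 𝓗]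
    [NormedAddCommGroup 𝓧] [InnerProductSpace ℝ 𝓧]
    (S : Type*) [Group S] [MulAction S 𝓧]
    {A : Type*} (γ : 𝓗 → 𝓧) (Λ : A → 𝓧 →ₗ[ℝ] 𝓗) (τ : 𝓧 → 𝓧) : Prop where
  /-- `S` acts on `𝓧` by linear maps. -/
  smul_add_smul : ∀ (s : S) (c : ℝ) (x y : 𝓧), s • (c • x + y) = c • (s • x) + s • y
  /-- `S` acts on `𝓧` by isometries. -/
  norm_smul : ∀ (s : S) (x : 𝓧), ‖s • x‖ = ‖x‖
  /-- Each `Λ a` is a (linear) isometry. -/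
  norm_lambda : ∀ (a : A) (x : 𝓧), ‖Λ a x‖ = ‖x‖
  /-- `τ` is `S`-invariant. -/
  tau_smul : ∀ (s : S) (x : 𝓧), τ (s • x) = τ x
  /-- `τ x` belongs to the orbit `S • x`. -/
  tau_orbit : ∀ x : 𝓧, ∃ s : S, τ x = s • x
  /-- `γ ∘ Λ a = τ` for all `a ∈ A`. -/
  gamma_lambda : ∀ (a : A) (x : 𝓧), γ (Λ a x) = τ x
  /-- Every element of `𝓗` admits a spectral decomposition. -/
  exists_decomp : ∀ Z : 𝓗, ∃ a : A, Z = Λ a (γ Z)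
  /-- Von Neumann-type trace inequality. -/
  inner_le : ∀ Z W : 𝓗, ⟪Z, W⟫_ℝ ≤ ⟪γ Z, γ W⟫_ℝ

namespace SpectralDecompositionSystem

variable {𝓗 𝓧 : Type*} [NormedAddCommGroup 𝓗] [InnerProductSpace ℝ 𝓗]
  [NormedAddCommGroup 𝓧] [InnerProductSpace ℝ 𝓧] {S : Type*} [Group S] [MulAction S 𝓧]
  {A : Type*} {γ : 𝓗 → 𝓧} {Λ : A → 𝓧 →ₗ[ℝ] 𝓗} {τ : 𝓧 → 𝓧}

theorem smul_zero (hsys : SpectralDecompositionSystem 𝓗 𝓧 S γ Λ τ) (s : S) :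
    s • (0 : 𝓧) = 0 :=
  norm_eq_zero.mp <| (hsys.norm_smul s 0).trans norm_zero

def smulLinearIsometry (hsys : SpectralDecompositionSystem 𝓗 𝓧 S γ Λ τ) (s : S) :
    𝓧 →ₗᵢ[ℝ] 𝓧 where
  toFun u := s • u
  map_add' u v := by simpa using hsys.smul_add_smul s 1 u v
  map_smul' c u := by simpa [hsys.smul_zero s] using hsys.smul_add_smul s c u 0
  norm_map' := hsys.norm_smul s

def lambdaLinearIsometry (hsys : SpectralDecompositionSystem 𝓗 𝓧 S γ Λ τ) (a : A) :
    𝓧 →ₗᵢ[ℝ] 𝓗 :=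
  { Λ a with norm_map' := hsys.norm_lambda a }

theorem inner_smul_smul (hsys : SpectralDecompositionSystem 𝓗 𝓧 S γ Λ τ)
    (s : S) (u v : 𝓧) : ⟪s • u, s • v⟫_ℝ = ⟪u, v⟫_ℝ :=
  (hsys.smulLinearIsometry s).inner_map_map u v

theorem inner_lambda_lambda (hsys : SpectralDecompositionSystem 𝓗 𝓧 S γ Λ τ)
    (a : A) (u v : 𝓧) : ⟪Λ a u, Λ a v⟫_ℝ = ⟪u, v⟫_ℝ :=
  (hsys.lambdaLinearIsometry a).inner_map_map u v

theorem inner_le_inner_tau [Nonempty A] (hsys : SpectralDecompositionSystem 𝓗 𝓧 S γ Λ τ)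
    (u v : 𝓧) : ⟪u, v⟫_ℝ ≤ ⟪τ u, τ v⟫_ℝ := by
  obtain ⟨a⟩ := ‹Nonempty A›
  simpa only [hsys.inner_lambda_lambda, hsys.gamma_lambda] using hsys.inner_le (Λ a u) (Λ a v)

theorem exists_inner_smul_eq_inner_tau (hsys : SpectralDecompositionSystem 𝓗 𝓧 S γ Λ τ)
    (x y : 𝓧) : ∃ s : S, ⟪s • x, y⟫_ℝ = ⟪τ x, τ y⟫_ℝ := by
  obtain ⟨s, hs⟩ := hsys.tau_orbit x
  obtain ⟨t, ht⟩ := hsys.tau_orbit y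
  refine ⟨t⁻¹ * s, ?_⟩
  rw [hs, ht, ← hsys.inner_smul_smul t, smul_smul, mul_inv_cancel_left]

end SpectralDecompositionSystem

variable {𝓗 𝓧 : Type*} [NormedAddCommGroup 𝓗] [InnerProductSpace ℝ 𝓗]
  [FiniteDimensional ℝ 𝓗] [NormedAddCommGroup 𝓧] [InnerProductSpace ℝ 𝓧]
  [FiniteDimensional ℝ 𝓧] {S : Type*} [Group S] [MulAction S 𝓧]
  {A : Type*} [Nonempty A]

theorem inner_tau_tau_isGreatest
    (γ : 𝓗 → 𝓧) (Λ : A → 𝓧 →ₗ[ℝ] 𝓗) (τ : 𝓧 → 𝓧)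
    (hsys : SpectralDecompositionSystem 𝓗 𝓧 S γ Λ τ)
    (x y : 𝓧) :
    IsGreatest (Set.range fun s : S => ⟪s • x, y⟫_ℝ) ⟪τ x, τ y⟫_ℝ := by
  refine ⟨hsys.exists_inner_smul_eq_inner_tau x y, ?_⟩
  rintro _ ⟨s, rfl⟩
  simpa only [hsys.tau_smul] using hsys.inner_le_inner_tau (s • x) y
end

section
/- Let 𝔥 be a Euclidean space with spectral decomposition system (𝒳, S, γ, (Λ_a)_{a∈A}) and spectral-induced ordering mapping τ. Then the range of τ is a closed convex cone in 𝒳, and for every x ∈ 𝒳 the orbit S • x = {s • x : s ∈ S} is a compact subset of 𝒳. -/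
/-!
Applying the trace inequality to `Λ a x` and `Λ a y` gives `⟪x, y⟫ ≤ ⟪τ x, τ y⟫`, while `τ`
preserves norms. Hence `τ` is `1`-Lipschitz, and a point `x` lies in the range of `τ` (i.e. is
fixed by `τ`) iff `0 ≤ ⟪τ y - y, x⟫` for every `y`: the range of `τ` is the inner dual cone of
`{τ y - y}`, a closed convex cone. An orbit `S • x` is the fibre `τ⁻¹ {τ x}`, which is closed by
continuity of `τ` and lies in the sphere of radius `‖x‖`.
-/

open scoped InnerProductSpace

variable {𝓗 𝓧 : Type*} [NormedAddCommGroup 𝓗] [InnerProductSpace ℝ 𝓗]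
  [FiniteDimensional ℝ 𝓗] [NormedAddCommGroup 𝓧] [InnerProductSpace ℝ 𝓧]
  [FiniteDimensional ℝ 𝓧] {S : Type*} [Group S] [MulAction S 𝓧]
  {A : Type*} [Nonempty A]

theorem eq_of_norm_eq_of_norm_sq_le_inner {E : Type*} [NormedAddCommGroup E]
    [InnerProductSpace ℝ E] {u v : E} (hnorm : ‖u‖ = ‖v‖) (hle : ‖v‖ ^ 2 ≤ ⟪u, v⟫_ℝ) :
    u = v := by
  have hsq : ‖u - v‖ ^ 2 ≤ 0 := by rw [norm_sub_sq_real, hnorm]; linarith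
  rwa [sq_nonpos_iff, norm_eq_zero, sub_eq_zero] at hsq

namespace SpectralDecompositionSystem

omit [FiniteDimensional ℝ 𝓗] [FiniteDimensional ℝ 𝓧] [Nonempty A]

variable {γ : 𝓗 → 𝓧} {Λ : A → 𝓧 →ₗ[ℝ] 𝓗} {τ : 𝓧 → 𝓧}
  (hsys : SpectralDecompositionSystem 𝓗 𝓧 S γ Λ τ)
include hsys

theorem norm_tau (x : 𝓧) : ‖τ x‖ = ‖x‖ := by
  obtain ⟨s, hs⟩ := hsys.tau_orbit x
  rw [hs, hsys.norm_smul]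

theorem mem_range_tau_iff {x : 𝓧} : x ∈ Set.range τ ↔ τ x = x := by
  refine ⟨?_, fun h ↦ ⟨x, h⟩⟩
  rintro ⟨y, rfl⟩
  obtain ⟨s, hs⟩ := hsys.tau_orbit y
  rw [hs, hsys.tau_smul, hs]

theorem orbit_eq_preimage_tau (x : 𝓧) : MulAction.orbit S x = τ ⁻¹' {τ x} := by
  ext z
  refine ⟨?_, fun hz ↦ ?_⟩
  · rintro ⟨s, rfl⟩
    exact hsys.tau_smul s x
  · obtain ⟨s, hs⟩ := hsys.tau_orbit z
    obtain ⟨t, ht⟩ := hsys.tau_orbit x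
    refine ⟨s⁻¹ * t, ?_⟩
    change (s⁻¹ * t) • x = z
    rw [mul_smul, ← ht, ← Set.mem_singleton_iff.mp hz, hs, inv_smul_smul]

theorem inner_le_inner_tau_s2 [Nonempty A] (x y : 𝓧) : ⟪x, y⟫_ℝ ≤ ⟪τ x, τ y⟫_ℝ := by
  obtain ⟨a⟩ := ‹Nonempty A›
  calc ⟪x, y⟫_ℝ = ⟪Λ a x, Λ a y⟫_ℝ :=
        ((LinearMap.norm_map_iff_inner_map_map (Λ a)).mp (hsys.norm_lambda a) x y).symm
    _ ≤ ⟪γ (Λ a x), γ (Λ a y)⟫_ℝ := hsys.inner_le _ _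
    _ = ⟪τ x, τ y⟫_ℝ := by rw [hsys.gamma_lambda, hsys.gamma_lambda]

theorem lipschitzWith_one_tau [Nonempty A] : LipschitzWith 1 τ := by
  refine LipschitzWith.mk_one fun x y ↦ ?_
  have hsq : ‖τ x - τ y‖ ^ 2 ≤ ‖x - y‖ ^ 2 := by
    rw [norm_sub_sq_real, norm_sub_sq_real, hsys.norm_tau, hsys.norm_tau]
    linarith [hsys.inner_le_inner_tau_s2 x y]
  rw [dist_eq_norm, dist_eq_norm]
  exact (sq_le_sq₀ (norm_nonneg _) (norm_nonneg _)).mp hsq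

theorem range_tau_eq_innerDual [Nonempty A] [CompleteSpace 𝓧] :
    Set.range τ = ProperCone.innerDual (Set.range fun y ↦ τ y - y) := by
  ext x
  simp only [hsys.mem_range_tau_iff, SetLike.mem_coe, ProperCone.mem_innerDual,
    Set.forall_mem_range, inner_sub_left, sub_nonneg]
  refine ⟨fun hx y ↦ ?_, fun h ↦ ?_⟩
  · simpa only [hx] using hsys.inner_le_inner_tau_s2 y x
  · refine eq_of_norm_eq_of_norm_sq_le_inner (hsys.norm_tau x) ?_
    simpa only [real_inner_self_eq_norm_sq] using h x

theorem isCompact_orbit [Nonempty A] [ProperSpace 𝓧] (x : 𝓧) :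
    IsCompact (MulAction.orbit S x) := by
  rw [hsys.orbit_eq_preimage_tau]
  refine Metric.isCompact_of_isClosed_isBounded
    (isClosed_singleton.preimage hsys.lipschitzWith_one_tau.continuous)
    (Metric.isBounded_sphere (x := 0) (r := ‖x‖) |>.subset fun z hz ↦ ?_)
  rw [mem_sphere_zero_iff_norm, ← hsys.norm_tau, Set.mem_singleton_iff.mp hz, hsys.norm_tau]

end SpectralDecompositionSystem

theorem range_tau_closedConvexCone_and_orbit_compact
    (γ : 𝓗 → 𝓧) (Λ : A → 𝓧 →ₗ[ℝ] 𝓗) (τ : 𝓧 → 𝓧)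
    (hsys : SpectralDecompositionSystem 𝓗 𝓧 S γ Λ τ) :
    IsClosed (Set.range τ) ∧
    (∀ u ∈ Set.range τ, ∀ v ∈ Set.range τ, u + v ∈ Set.range τ) ∧
    (∀ c : ℝ, 0 ≤ c → ∀ u ∈ Set.range τ, c • u ∈ Set.range τ) ∧
    (∀ x : 𝓧, IsCompact (MulAction.orbit S x)) := by
  rw [hsys.range_tau_eq_innerDual]
  exact ⟨ProperCone.isClosed _, fun u hu v hv ↦ add_mem hu hv,
    fun c hc u hu ↦ ProperCone.smul_mem _ hu hc, hsys.isCompact_orbit⟩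
end

section
/- Let 𝔥 be a Euclidean space with spectral decomposition system (𝒳, S, γ, (Λ_a)_{a∈A}), let 𝒟 be a nonempty subset of 𝔥, and suppose there exists a ∈ A such that X = Λ_a(γ(X)) for every X ∈ 𝒟. Then for every positive integer m, every family (X_i)_{1≤i≤m} in 𝒟, and every family (α_i)_{1≤i≤m} of nonnegative reals: γ(Σ_{i=1}^m α_i X_i) = Σ_{i=1}^m α_i γ(X_i), and moreover Σ_{i=1}^m α_i X_i = Λ_a(γ(Σ_{i=1}^m α_i X_i)). -/
/-! With `x = ∑ αᵢ γ(Xᵢ)`, linearity of `Λ a` gives `∑ αᵢ Xᵢ = Λ a x`, hence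
`γ(∑ αᵢ Xᵢ) = τ x`. It remains to see `τ x = x`: the trace inequality yields
`⟪γ X, y⟫ ≤ ⟪γ X, τ y⟫` whenever `X = Λ a (γ X)`, so `‖x‖² ≤ ⟪x, τ x⟫` as the `αᵢ` are
nonnegative; since `τ x` lies in the orbit of `x` it has the same norm, which forces `τ x = x`. -/

open scoped InnerProductSpace

theorem eq_of_norm_eq_of_real_inner_self_le {F : Type*} [NormedAddCommGroup F]
    [InnerProductSpace ℝ F] {x y : F} (hnorm : ‖y‖ = ‖x‖) (hle : ⟪x, x⟫_ℝ ≤ ⟪x, y⟫_ℝ) :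
    y = x := by
  have h : ‖y - x‖ ^ 2 ≤ 0 := by
    rw [norm_sub_sq_real, hnorm, real_inner_comm, ← real_inner_self_eq_norm_sq]
    linarith
  rw [← sub_eq_zero, ← norm_eq_zero]
  exact pow_eq_zero_iff two_ne_zero |>.mp (le_antisymm h (sq_nonneg _))

namespace SpectralDecompositionSystem

variable {𝓗 𝓧 : Type*} [NormedAddCommGroup 𝓗] [InnerProductSpace ℝ 𝓗]
  [NormedAddCommGroup 𝓧] [InnerProductSpace ℝ 𝓧] {S : Type*} [Group S] [MulAction S 𝓧]
  {A : Type*} {γ : 𝓗 → 𝓧} {Λ : A → 𝓧 →ₗ[ℝ] 𝓗} {τ : 𝓧 → 𝓧}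

theorem norm_tau_s5 (hsys : SpectralDecompositionSystem 𝓗 𝓧 S γ Λ τ) (x : 𝓧) : ‖τ x‖ = ‖x‖ := by
  obtain ⟨s, hs⟩ := hsys.tau_orbit x
  rw [hs, hsys.norm_smul]

theorem inner_lambda (hsys : SpectralDecompositionSystem 𝓗 𝓧 S γ Λ τ) (a : A) (x y : 𝓧) :
    ⟪Λ a x, Λ a y⟫_ℝ = ⟪x, y⟫_ℝ :=
  LinearIsometry.inner_map_map ⟨Λ a, hsys.norm_lambda a⟩ x y

theorem tau_eq_self_of_inner_self_le (hsys : SpectralDecompositionSystem 𝓗 𝓧 S γ Λ τ)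
    {x : 𝓧} (hx : ⟪x, x⟫_ℝ ≤ ⟪x, τ x⟫_ℝ) : τ x = x :=
  eq_of_norm_eq_of_real_inner_self_le (hsys.norm_tau_s5 x) hx

theorem inner_gamma_le_inner_tau (hsys : SpectralDecompositionSystem 𝓗 𝓧 S γ Λ τ)
    {a : A} {X : 𝓗} (hX : X = Λ a (γ X)) (x : 𝓧) :
    ⟪γ X, x⟫_ℝ ≤ ⟪γ X, τ x⟫_ℝ :=
  calc ⟪γ X, x⟫_ℝ = ⟪X, Λ a x⟫_ℝ := by rw [← hsys.inner_lambda a, ← hX]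
    _ ≤ ⟪γ X, γ (Λ a x)⟫_ℝ := hsys.inner_le _ _
    _ = ⟪γ X, τ x⟫_ℝ := by rw [hsys.gamma_lambda]

theorem tau_sum_smul_gamma (hsys : SpectralDecompositionSystem 𝓗 𝓧 S γ Λ τ)
    {ι : Type*} (s : Finset ι) (a : A) (X : ι → 𝓗)
    (hX : ∀ i ∈ s, X i = Λ a (γ (X i))) (α : ι → ℝ) (hα : ∀ i ∈ s, 0 ≤ α i) :
    τ (∑ i ∈ s, α i • γ (X i)) = ∑ i ∈ s, α i • γ (X i) := by
  set x := ∑ i ∈ s, α i • γ (X i)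
  refine hsys.tau_eq_self_of_inner_self_le ?_
  simp only [x, sum_inner, real_inner_smul_left]
  exact Finset.sum_le_sum fun i hi =>
    mul_le_mul_of_nonneg_left (hsys.inner_gamma_le_inner_tau (hX i hi) _) (hα i hi)

end SpectralDecompositionSystem

variable {𝓗 𝓧 : Type*} [NormedAddCommGroup 𝓗] [InnerProductSpace ℝ 𝓗]
  [FiniteDimensional ℝ 𝓗] [NormedAddCommGroup 𝓧] [InnerProductSpace ℝ 𝓧]
  [FiniteDimensional ℝ 𝓧] {S : Type*} [Group S] [MulAction S 𝓧]
  {A : Type*} [Nonempty A]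

theorem gamma_additive_on_simultaneously_decomposable_general
    (γ : 𝓗 → 𝓧) (Λ : A → 𝓧 →ₗ[ℝ] 𝓗) (τ : 𝓧 → 𝓧)
    (hsys : SpectralDecompositionSystem 𝓗 𝓧 S γ Λ τ)
    (𝒟 : Set 𝓗)
    (a : A) (ha : ∀ Z ∈ 𝒟, Z = Λ a (γ Z))
    (m : ℕ) (Xf : Fin m → 𝓗) (hXf : ∀ i, Xf i ∈ 𝒟)
    (α : Fin m → ℝ) (hα : ∀ i, 0 ≤ α i) :
    γ (∑ i, α i • Xf i) = ∑ i, α i • γ (Xf i) ∧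
    (∑ i, α i • Xf i) = Λ a (γ (∑ i, α i • Xf i)) := by
  set x := ∑ i, α i • γ (Xf i)
  have hΛx : Λ a x = ∑ i, α i • Xf i := by
    simp only [x, map_sum, map_smul, ← ha _ (hXf _)]
  have hγ : γ (∑ i, α i • Xf i) = x := by
    rw [← hΛx, hsys.gamma_lambda,
      hsys.tau_sum_smul_gamma _ a Xf (fun i _ => ha _ (hXf i)) α (fun i _ => hα i)]
  exact ⟨hγ, by rw [hγ, hΛx]⟩

theorem gamma_additive_on_simultaneously_decomposable
    (γ : 𝓗 → 𝓧) (Λ : A → 𝓧 →ₗ[ℝ] 𝓗) (τ : 𝓧 → 𝓧)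
    (hsys : SpectralDecompositionSystem 𝓗 𝓧 S γ Λ τ)
    (𝒟 : Set 𝓗) (h𝒟 : 𝒟.Nonempty)
    (a : A) (ha : ∀ Z ∈ 𝒟, Z = Λ a (γ Z))
    (m : ℕ) (hm : 0 < m) (Xf : Fin m → 𝓗) (hXf : ∀ i, Xf i ∈ 𝒟)
    (α : Fin m → ℝ) (hα : ∀ i, 0 ≤ α i) :
    γ (∑ i, α i • Xf i) = ∑ i, α i • γ (Xf i) ∧
    (∑ i, α i • Xf i) = Λ a (γ (∑ i, α i • Xf i)) :=
  gamma_additive_on_simultaneously_decomposable_general γ Λ τ hsys 𝒟 a ha m Xf hXf α hα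
end

section
/- (Conjugate of a spectral function.) Let 𝔥 be a Euclidean space with spectral decomposition system (𝒳, S, γ, (Λ_a)_{a∈A}), and let φ : 𝒳 → (−∞, +∞] be proper (not identically +∞) and S-invariant (φ(s • x) = φ(x) for all s ∈ S, x ∈ 𝒳). Then (φ ∘ γ)* = φ* ∘ γ, where for a proper function f on a Euclidean space 𝓗, its Fenchel conjugate is f*(y) = sup_{x ∈ 𝓗} ( ⟨x, y⟩ − f(x) ) with values in [−∞, +∞]. -/
open scoped InnerProductSpace

variable {𝓗 𝓧 : Type*} [NormedAddCommGroup 𝓗] [InnerProductSpace ℝ 𝓗]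
  [FiniteDimensional ℝ 𝓗] [NormedAddCommGroup 𝓧] [InnerProductSpace ℝ 𝓧]
  [FiniteDimensional ℝ 𝓧] {S : Type*} [Group S] [MulAction S 𝓧]
  {A : Type*} [Nonempty A]

/-- The Fenchel conjugate of an extended-real-valued function on a Euclidean space. -/
noncomputable def fenchelConjugate {V : Type*} [NormedAddCommGroup V]
    [InnerProductSpace ℝ V] (f : V → EReal) : V → EReal :=
  fun y => ⨆ x : V, (((⟪x, y⟫_ℝ : ℝ) : EReal) - f x)

/-! The trace inequality `⟪Z, W⟫ ≤ ⟪γ Z, γ W⟫` bounds `(φ ∘ γ)*` by `φ* ∘ γ`. Conversely, writing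
`Y = Λ a (γ Y)`, the isometry `Λ a` carries every `x` to a point `Λ a x` with
`⟪Λ a x, Y⟫ = ⟪x, γ Y⟫` and `φ (γ (Λ a x)) = φ (τ x) = φ x`, the last step by `S`-invariance
since `τ x` lies in the orbit of `x`. -/

section FenchelConjugate

variable {E F : Type*} [NormedAddCommGroup E] [InnerProductSpace ℝ E]
  [NormedAddCommGroup F] [InnerProductSpace ℝ F]

theorem fenchelConjugate_comp_le {g : E → F} (hg : ∀ x y, ⟪x, y⟫_ℝ ≤ ⟪g x, g y⟫_ℝ)
    (f : F → EReal) (y : E) : fenchelConjugate (f ∘ g) y ≤ fenchelConjugate f (g y) :=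
  iSup_le fun x => calc
    ((⟪x, y⟫_ℝ : ℝ) : EReal) - f (g x) ≤ ((⟪g x, g y⟫_ℝ : ℝ) : EReal) - f (g x) :=
      EReal.sub_le_sub (by exact_mod_cast hg x y) le_rfl
    _ ≤ fenchelConjugate f (g y) := le_iSup (fun z => ((⟪z, g y⟫_ℝ : ℝ) : EReal) - f z) (g x)

theorem le_fenchelConjugate_comp {g : E → F} (L : F →ₗᵢ[ℝ] E) {f : F → EReal}
    (hf : ∀ x, f (g (L x)) = f x) {y : E} (hy : y = L (g y)) :
    fenchelConjugate f (g y) ≤ fenchelConjugate (f ∘ g) y :=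
  iSup_le fun x => calc
    ((⟪x, g y⟫_ℝ : ℝ) : EReal) - f x = ((⟪L x, y⟫_ℝ : ℝ) : EReal) - f (g (L x)) := by
      rw [hf, hy, L.inner_map_map, ← hy]
    _ ≤ fenchelConjugate (f ∘ g) y :=
      le_iSup (fun z => ((⟪z, y⟫_ℝ : ℝ) : EReal) - f (g z)) (L x)

end FenchelConjugate

namespace SpectralDecompositionSystem

variable {E F : Type*} [NormedAddCommGroup E] [InnerProductSpace ℝ E]
  [NormedAddCommGroup F] [InnerProductSpace ℝ F] {G : Type*} [Group G] [MulAction G F]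
  {ι : Type*} {γ : E → F} {Λ : ι → F →ₗ[ℝ] E} {τ : F → F}

def lambdaIsometry (hsys : SpectralDecompositionSystem E F G γ Λ τ) (a : ι) : F →ₗᵢ[ℝ] E :=
  ⟨Λ a, hsys.norm_lambda a⟩

theorem apply_gamma_lambda {β : Type*} (hsys : SpectralDecompositionSystem E F G γ Λ τ)
    {f : F → β} (hf : ∀ (s : G) (x : F), f (s • x) = f x) (a : ι) (x : F) :
    f (γ (Λ a x)) = f x := by
  obtain ⟨s, hs⟩ := hsys.tau_orbit x
  rw [hsys.gamma_lambda, hs, hf]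

end SpectralDecompositionSystem

theorem spectral_function_fenchelConjugate_general
    (γ : 𝓗 → 𝓧) (Λ : A → 𝓧 →ₗ[ℝ] 𝓗) (τ : 𝓧 → 𝓧)
    (hsys : SpectralDecompositionSystem 𝓗 𝓧 S γ Λ τ)
    (φ : 𝓧 → EReal)
    (hφ : ∀ (s : S) (x : 𝓧), φ (s • x) = φ x) :
    fenchelConjugate (fun W => φ (γ W)) = fun Y => fenchelConjugate φ (γ Y) := by
  funext Y
  obtain ⟨a, ha⟩ := hsys.exists_decomp Y
  exact le_antisymm (fenchelConjugate_comp_le hsys.inner_le φ Y)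
    (le_fenchelConjugate_comp (hsys.lambdaIsometry a) (hsys.apply_gamma_lambda hφ a) ha)

/-- Conjugate of a spectral function. -/
theorem spectral_function_fenchelConjugate
    (γ : 𝓗 → 𝓧) (Λ : A → 𝓧 →ₗ[ℝ] 𝓗) (τ : 𝓧 → 𝓧)
    (hsys : SpectralDecompositionSystem 𝓗 𝓧 S γ Λ τ)
    (φ : 𝓧 → EReal) (hproper : ∃ x, φ x ≠ ⊤) (hbot : ∀ x, φ x ≠ ⊥)
    (hφ : ∀ (s : S) (x : 𝓧), φ (s • x) = φ x) :
    fenchelConjugate (fun W => φ (γ W)) = fun Y => fenchelConjugate φ (γ Y) :=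
  spectral_function_fenchelConjugate_general γ Λ τ hsys φ hφ
end
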